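/- arXiv:2305.18227 — 3 statements merged into one kernel-verified Lean document; each statement's English description precedes it below -/
import Mathlib

section
/- Let X={x_1<⋯<x_k} be a feasible solution of an instance I on [n], let H_1,…,H_k with H_i={x_{i−1}+1,…,x_i} (x_0=0) be the solution partition induced by X, and let I_i be the restriction of I to H_i, regarded as an instance in its own right. Then ∑_{i=1}^{k} opt(I_i) ≤ k − 1 + opt(I). -/
open Finset

/-- Waiting time from `t` until the first acknowledgment in `X` at or after `t` (`0` if none). -/
noncomputable def ackWait (X : Finset ℕ) (t : ℕ) : ℕ :=
  if h : (X.filter fun x => t ≤ x).Nonempty then (X.filter fun x => t ≤ x).min' h - t else 0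

/-- Delay cost `D(I,X)` of solution `X` for the instance `p` on horizon `{a, …, b}`
with delay parameter `d`. -/
noncomputable def delayCost (d : ℝ) (a b : ℕ) (p : ℕ → ℝ) (X : Finset ℕ) : ℝ :=
  (1 / d) * ∑ t ∈ Finset.Icc a b, p t * (ackWait X t : ℝ)

/-- Total cost `F(I,X) = |X| + D(I,X)`. -/
noncomputable def cost (d : ℝ) (a b : ℕ) (p : ℕ → ℝ) (X : Finset ℕ) : ℝ :=
  (X.card : ℝ) + delayCost d a b p X

/-- Feasibility of `X` for the instance `p` on horizon `{a,…,b}`: `X` is a nonempty subset of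
the horizon and every time with positive demand has an acknowledgment at or after it. -/
def Feasible (a b : ℕ) (p : ℕ → ℝ) (X : Finset ℕ) : Prop :=
  X.Nonempty ∧ X ⊆ Finset.Icc a b ∧ ∀ t ∈ Finset.Icc a b, 0 < p t → ∃ x ∈ X, t ≤ x

/-- Optimal cost `opt(I)` of the instance `p` on horizon `{a,…,b}`. -/
noncomputable def opt (d : ℝ) (a b : ℕ) (p : ℕ → ℝ) : ℝ :=
  sInf {c : ℝ | ∃ X : Finset ℕ, Feasible a b p X ∧ cost d a b p X = c}

/-- `Δ(I,Y,t) = D(I,Y) − D(I,Y ∪ {t})`. -/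
noncomputable def delta (d : ℝ) (a b : ℕ) (p : ℕ → ℝ) (Y : Finset ℕ) (t : ℕ) : ℝ :=
  delayCost d a b p Y - delayCost d a b p (insert t Y)

/-- Auxiliary error `τ([t1,t2], I, Î) = opt(O(I⟨t1,t2⟩,Î⟨t1,t2⟩)) − opt(U(I⟨t1,t2⟩,Î⟨t1,t2⟩))`. -/
noncomputable def auxErr (d : ℝ) (t1 t2 : ℕ) (p q : ℕ → ℝ) : ℝ :=
  opt d t1 t2 (fun t => max (p t) (q t)) - opt d t1 t2 (fun t => min (p t) (q t))

lemma ackWait_le_sub {X : Finset ℕ} {t y : ℕ} (hy : y ∈ X) (ht : t ≤ y) :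
    ackWait X t ≤ y - t := by
  have hm : y ∈ X.filter fun z => t ≤ z := mem_filter.2 ⟨hy, ht⟩
  have hne : (X.filter fun z => t ≤ z).Nonempty := ⟨y, hm⟩
  rw [ackWait, dif_pos hne]
  exact Nat.sub_le_sub_right (min'_le _ _ hm) t

lemma delayCost_nonneg {d : ℝ} (hd : 0 < d) (a b : ℕ) {p : ℕ → ℝ} (hp : ∀ t, 0 ≤ p t)
    (X : Finset ℕ) : 0 ≤ delayCost d a b p X :=
  mul_nonneg (by positivity) (Finset.sum_nonneg fun t _ => mul_nonneg (hp t) (Nat.cast_nonneg _))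

lemma cost_nonneg {d : ℝ} (hd : 0 < d) (a b : ℕ) {p : ℕ → ℝ} (hp : ∀ t, 0 ≤ p t)
    (X : Finset ℕ) : 0 ≤ cost d a b p X :=
  add_nonneg (Nat.cast_nonneg _) (delayCost_nonneg hd a b hp X)

lemma opt_le_cost {d : ℝ} (hd : 0 < d) {a b : ℕ} {p : ℕ → ℝ} (hp : ∀ t, 0 ≤ p t)
    {X : Finset ℕ} (hX : Feasible a b p X) : opt d a b p ≤ cost d a b p X := by
  apply csInf_le
  · refine ⟨0, ?_⟩
    rintro c ⟨X', hX', rfl⟩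
    exact cost_nonneg hd a b hp X'
  · exact ⟨X, hX, rfl⟩

/-- If `X = {x_1 < ⋯ < x_k}` is a feasible solution of `I` on `[n]` and `I_i` is
the restriction of `I` to `H_i = {x_{i-1}+1,…,x_i}` (with `x_0 = 0`), then
`∑_{i=1}^k opt(I_i) ≤ k − 1 + opt(I)`. -/
theorem sum_opt_subinstances_le (d : ℝ) (hd : 0 < d) (n k : ℕ) (hk : 0 < k)
    (p : ℕ → ℝ) (hp : ∀ t, 0 ≤ p t)
    (x : ℕ → ℕ) (hx0 : x 0 = 0) (hmono : ∀ i < k, x i < x (i + 1))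
    (hX : Feasible 1 n p ((Finset.Icc 1 k).image x)) :
    ∑ i ∈ Finset.Icc 1 k, opt d (x (i - 1) + 1) (x i) p ≤ (k : ℝ) - 1 + opt d 1 n p := by
  -- monotonicity of x on [0,k]
  have hmono' : ∀ a b : ℕ, a ≤ b → b ≤ k → x a ≤ x b := by
    intro a b hab
    induction hab with
    | refl => intro _; exact le_rfl
    | @step b' h ih =>
      intro hbk
      exact le_trans (ih (le_trans (Nat.le_succ b') hbk))
        (le_of_lt (hmono b' (Nat.lt_of_succ_le hbk)))
  have hxn : ∀ i, 1 ≤ i → i ≤ k → x i ≤ n := by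
    intro i h1 h2
    have : x i ∈ Finset.Icc 1 n :=
      hX.2.1 (mem_image.2 ⟨i, mem_Icc.2 ⟨h1, h2⟩, rfl⟩)
    exact (mem_Icc.1 this).2
  have hxi : ∀ i, 1 ≤ i → i ≤ k → x (i - 1) < x i := by
    intro i h1 h2
    have := hmono (i - 1) (by omega)
    have he : i - 1 + 1 = i := by omega
    rwa [he] at this
  -- the interval family
  set T : ℕ → Finset ℕ := fun i => Finset.Icc (x (i - 1) + 1) (x i) with hT
  have hTdisj : ∀ i ∈ Finset.Icc 1 k, ∀ i' ∈ Finset.Icc 1 k, i ≠ i' → Disjoint (T i) (T i') := by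
    have hgen : ∀ i i', i ∈ Finset.Icc 1 k → i' ∈ Finset.Icc 1 k → i < i' →
        Disjoint (T i) (T i') := by
      intro i i' hi hi' hlt
      rw [Finset.disjoint_left]
      intro a ha ha'
      rw [hT] at ha ha'
      simp only [mem_Icc] at ha ha'
      have hii' : x i ≤ x (i' - 1) := by
        apply hmono' i (i' - 1) (by omega)
        have := (mem_Icc.1 hi').2; omega
      omega
    intro i hi i' hi' hne
    rcases hne.lt_or_gt with h | h
    · exact hgen i i' hi hi' h
    · exact (hgen i' i hi' hi h).symm
  have hTsub : ∀ i ∈ Finset.Icc 1 k, T i ⊆ Finset.Icc 1 n := by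
    intro i hi a ha
    rw [hT] at ha
    simp only [mem_Icc] at ha ⊢
    have := hxn i (mem_Icc.1 hi).1 (mem_Icc.1 hi).2
    omega
  -- the key bound for an arbitrary feasible solution Y
  have key : ∀ Y : Finset ℕ, Feasible 1 n p Y →
      ∑ i ∈ Finset.Icc 1 k, opt d (x (i - 1) + 1) (x i) p ≤
        (k : ℝ) - 1 + cost d 1 n p Y := by
    intro Y hY
    obtain ⟨hYne, hYsub, hYcov⟩ := hY
    set m := Y.max' hYne with hm
    have hmY : m ∈ Y := Y.max'_mem hYne
    have hm1 : 1 ≤ m := (mem_Icc.1 (hYsub hmY)).1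
    have hmn : m ≤ n := (mem_Icc.1 (hYsub hmY)).2
    -- choice of the special index j
    have hjex : ∃ j : ℕ, (¬ m ≤ x k → j = 0) ∧
        (m ≤ x k → 1 ≤ j ∧ j ≤ k ∧ m ≤ x j ∧ x (j - 1) < m) := by
      by_cases hc : m ≤ x k
      · set B := (Finset.Icc 1 k).filter (fun i => m ≤ x i) with hB
        have hBne : B.Nonempty := ⟨k, mem_filter.2 ⟨mem_Icc.2 ⟨hk, le_rfl⟩, hc⟩⟩
        refine ⟨B.min' hBne, fun h => absurd hc h, fun _ => ?_⟩
        have hmem0 := B.min'_mem hBne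
        have hmem : (1 ≤ B.min' hBne ∧ B.min' hBne ≤ k) ∧ m ≤ x (B.min' hBne) := by
          have := mem_filter.1 hmem0
          exact ⟨mem_Icc.1 this.1, this.2⟩
        refine ⟨hmem.1.1, hmem.1.2, hmem.2, ?_⟩
        by_contra hlt
        push_neg at hlt
        rcases Nat.eq_or_lt_of_le hmem.1.1 with h1 | h1
        · rw [← h1] at hlt
          simp only [Nat.sub_self, hx0] at hlt
          omega
        · have hmemB : B.min' hBne - 1 ∈ B := by
            exact mem_filter.2 ⟨mem_Icc.2 ⟨by omega, by omega⟩, hlt⟩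
          have := B.min'_le _ hmemB
          omega
      · exact ⟨0, fun _ => rfl, fun h => absurd h hc⟩
    obtain ⟨j, hjA, hjB⟩ := hjex
    have hjprop : ∀ i, i ∈ Finset.Icc 1 k → i = j → m ≤ x i ∧ x (i - 1) < m := by
      intro i hi hij
      have h1 : 1 ≤ i := (mem_Icc.1 hi).1
      by_cases hc : m ≤ x k
      · obtain ⟨_, _, h3, h4⟩ := hjB hc
        rw [hij]; exact ⟨h3, h4⟩
      · exfalso; have := hjA hc; omega
    -- the per-block solutions
    set Z : ℕ → Finset ℕ := fun i => Y ∩ T i with hZ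
    set Yi : ℕ → Finset ℕ := fun i => if i = j then Z i else insert (x i) (Z i) with hYi
    have hZsub : ∀ i, Z i ⊆ T i := fun i => inter_subset_right
    have hZsubY : ∀ i, Z i ⊆ Y := fun i => inter_subset_left
    -- feasibility of each Yi
    have hfeas : ∀ i ∈ Finset.Icc 1 k, Feasible (x (i - 1) + 1) (x i) p (Yi i) := by
      intro i hi
      obtain ⟨hi1, hik⟩ := mem_Icc.1 hi
      have hxii := hxi i hi1 hik
      have hxin := hxn i hi1 hik
      have hcov : ∀ t ∈ Finset.Icc (x (i - 1) + 1) (x i), 0 < p t → ∃ y ∈ Y, t ≤ y := by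
        intro t ht hpt
        apply hYcov t _ hpt
        rw [mem_Icc] at ht ⊢
        omega
      by_cases hij : i = j
      · obtain ⟨hjm, hjm'⟩ := hjprop i hi hij
        rw [hYi]
        simp only [if_pos hij]
        refine ⟨⟨m, ?_⟩, fun a ha => hZsub i ha, ?_⟩
        · rw [hZ, mem_inter]
          exact ⟨hmY, by rw [hT]; rw [mem_Icc]; omega⟩
        · intro t ht hpt
          obtain ⟨y, hy, hty⟩ := hcov t ht hpt
          refine ⟨y, ?_, hty⟩
          rw [hZ, mem_inter]
          have hym : y ≤ m := Y.le_max' y hy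
          rw [mem_Icc] at ht
          refine ⟨hy, by rw [hT, mem_Icc]; omega⟩
      · rw [hYi]
        simp only [if_neg hij]
        refine ⟨⟨x i, mem_insert_self _ _⟩, ?_, ?_⟩
        · intro a ha
          rcases mem_insert.1 ha with h | h
          · rw [h, mem_Icc]; omega
          · exact (hZsub i).trans (by rw [hT]) h
        · intro t ht _
          exact ⟨x i, mem_insert_self _ _, (mem_Icc.1 ht).2⟩
    -- pointwise delay comparison
    have hdelay : ∀ i ∈ Finset.Icc 1 k, ∀ t ∈ T i,
        p t * (ackWait (Yi i) t : ℝ) ≤ p t * (ackWait Y t : ℝ) := by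
      intro i hi t ht
      obtain ⟨hi1, hik⟩ := mem_Icc.1 hi
      rw [hT, mem_Icc] at ht
      rcases (hp t).lt_or_eq with hpt | hpt
      · -- positive demand
        have htn : t ∈ Finset.Icc 1 n := by
          rw [mem_Icc]
          have := hxn i hi1 hik
          omega
        obtain ⟨y, hy, hty⟩ := hYcov t htn hpt
        have hFm : y ∈ Y.filter fun z => t ≤ z := mem_filter.2 ⟨hy, hty⟩
        have hFne : (Y.filter fun z => t ≤ z).Nonempty := ⟨y, hFm⟩
        set y' := (Y.filter fun z => t ≤ z).min' hFne with hy'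
        have hy'mem := (Y.filter fun z => t ≤ z).min'_mem hFne
        rw [mem_filter] at hy'mem
        have hy'Y : y' ∈ Y := hy'mem.1
        have hty' : t ≤ y' := hy'mem.2
        have hwY : ackWait Y t = y' - t := by rw [ackWait, dif_pos hFne]
        have hz : ∃ z ∈ Yi i, t ≤ z ∧ z ≤ y' := by
          by_cases hij : i = j
          · obtain ⟨hjm, _⟩ := hjprop i hi hij
            have hym : y' ≤ m := Y.le_max' y' hy'Y
            refine ⟨y', ?_, hty', le_rfl⟩
            rw [hYi]; simp only [if_pos hij]
            rw [hZ, mem_inter]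
            exact ⟨hy'Y, by rw [hT, mem_Icc]; omega⟩
          · rw [hYi]; simp only [if_neg hij]
            by_cases hle : y' ≤ x i
            · refine ⟨y', ?_, hty', le_rfl⟩
              apply mem_insert_of_mem
              rw [hZ, mem_inter]
              exact ⟨hy'Y, by rw [hT, mem_Icc]; omega⟩
            · exact ⟨x i, mem_insert_self _ _, ht.2, by omega⟩
        obtain ⟨z, hzmem, htz, hzy⟩ := hz
        have h1 : ackWait (Yi i) t ≤ z - t := ackWait_le_sub hzmem htz
        have h2 : ackWait (Yi i) t ≤ ackWait Y t := by
          rw [hwY]; omega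
        exact mul_le_mul_of_nonneg_left (by exact_mod_cast h2) (le_of_lt hpt)
      · rw [← hpt]; simp
    -- opt of each block is at most the cost of Yi
    have hopt : ∀ i ∈ Finset.Icc 1 k,
        opt d (x (i - 1) + 1) (x i) p ≤ cost d (x (i - 1) + 1) (x i) p (Yi i) := by
      intro i hi
      exact opt_le_cost hd hp (hfeas i hi)
    -- cardinality bound
    have hZcard : ∑ i ∈ Finset.Icc 1 k, (Z i).card ≤ Y.card ∧
        (¬ m ≤ x k → (∑ i ∈ Finset.Icc 1 k, (Z i).card) + 1 ≤ Y.card) := by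
      have hZdisj : ∀ i ∈ Finset.Icc 1 k, ∀ i' ∈ Finset.Icc 1 k, i ≠ i' →
          Disjoint (Z i) (Z i') := fun i hi i' hi' hne =>
        (hTdisj i hi i' hi' hne).mono inf_le_right inf_le_right
      have hcardU : ((Finset.Icc 1 k).biUnion Z).card = ∑ i ∈ Finset.Icc 1 k, (Z i).card :=
        Finset.card_biUnion hZdisj
      have hUsub : (Finset.Icc 1 k).biUnion Z ⊆ Y := by
        intro a ha
        obtain ⟨i, _, hai⟩ := mem_biUnion.1 ha
        exact hZsubY i hai
      constructor
      · rw [← hcardU]; exact Finset.card_le_card hUsub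
      · intro hc
        have hmnot : m ∉ (Finset.Icc 1 k).biUnion Z := by
          intro hmem
          obtain ⟨i, hi, hai⟩ := mem_biUnion.1 hmem
          have := hZsub i hai
          rw [hT] at this
          have h2 := mem_Icc.1 ((hZsub i) hai)
          have : x i ≤ x k := hmono' i k (mem_Icc.1 hi).2 le_rfl
          omega
        have : (insert m ((Finset.Icc 1 k).biUnion Z)).card ≤ Y.card := by
          apply Finset.card_le_card
          intro a ha
          rcases mem_insert.1 ha with h | h
          · rw [h]; exact hmY
          · exact hUsub h
        rw [Finset.card_insert_of_notMem hmnot, hcardU] at this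
        omega
    have hcardN : (∑ i ∈ Finset.Icc 1 k, (Yi i).card) + 1 ≤ Y.card + k := by
      have hYicard : ∀ i ∈ Finset.Icc 1 k, (Yi i).card ≤ (Z i).card + 1 := by
        intro i _
        rw [hYi]
        by_cases hij : i = j
        · simp only [if_pos hij]; omega
        · simp only [if_neg hij]
          exact le_trans (Finset.card_insert_le _ _) le_rfl
      by_cases hc : m ≤ x k
      · -- special block j exists
        obtain ⟨hj1, hjk, _, _⟩ := hjB hc
        have hjIcc : j ∈ Finset.Icc 1 k := mem_Icc.2 ⟨hj1, hjk⟩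
        have hsum : ∑ i ∈ Finset.Icc 1 k, (Yi i).card =
            (Yi j).card + ∑ i ∈ (Finset.Icc 1 k).erase j, (Yi i).card :=
          (Finset.add_sum_erase _ _ hjIcc).symm
        have hYj : (Yi j).card = (Z j).card := by rw [hYi]; simp
        have hsum2 : ∑ i ∈ (Finset.Icc 1 k).erase j, (Yi i).card ≤
            (∑ i ∈ (Finset.Icc 1 k).erase j, (Z i).card) + (k - 1) := by
          calc ∑ i ∈ (Finset.Icc 1 k).erase j, (Yi i).card
              ≤ ∑ i ∈ (Finset.Icc 1 k).erase j, ((Z i).card + 1) :=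
                Finset.sum_le_sum fun i hi => hYicard i (Finset.mem_of_mem_erase hi)
            _ = (∑ i ∈ (Finset.Icc 1 k).erase j, (Z i).card) +
                ((Finset.Icc 1 k).erase j).card := by
                rw [Finset.sum_add_distrib, Finset.sum_const, smul_eq_mul, mul_one]
            _ = (∑ i ∈ (Finset.Icc 1 k).erase j, (Z i).card) + (k - 1) := by
                rw [Finset.card_erase_of_mem hjIcc, Nat.card_Icc]
                omega
        have hsumZ : (Z j).card + ∑ i ∈ (Finset.Icc 1 k).erase j, (Z i).card =
            ∑ i ∈ Finset.Icc 1 k, (Z i).card :=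
          Finset.add_sum_erase (Finset.Icc 1 k) (fun i => (Z i).card) hjIcc
        have := hZcard.1
        omega
      · have h1 : ∑ i ∈ Finset.Icc 1 k, (Yi i).card ≤
            (∑ i ∈ Finset.Icc 1 k, (Z i).card) + k := by
          calc ∑ i ∈ Finset.Icc 1 k, (Yi i).card
              ≤ ∑ i ∈ Finset.Icc 1 k, ((Z i).card + 1) := Finset.sum_le_sum hYicard
            _ = (∑ i ∈ Finset.Icc 1 k, (Z i).card) + k := by
                rw [Finset.sum_add_distrib, Finset.sum_const, smul_eq_mul, mul_one, Nat.card_Icc]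
                omega
        have := hZcard.2 hc
        omega
    -- delay bound
    have hdelsum : ∑ i ∈ Finset.Icc 1 k, delayCost d (x (i - 1) + 1) (x i) p (Yi i) ≤
        delayCost d 1 n p Y := by
      have hPD : (↑(Finset.Icc 1 k) : Set ℕ).PairwiseDisjoint T := by
        intro i hi i' hi' hne
        exact hTdisj i (by exact_mod_cast hi) i' (by exact_mod_cast hi') hne
      calc ∑ i ∈ Finset.Icc 1 k, delayCost d (x (i - 1) + 1) (x i) p (Yi i)
          = (1 / d) * ∑ i ∈ Finset.Icc 1 k, ∑ t ∈ T i, p t * (ackWait (Yi i) t : ℝ) := by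
            rw [Finset.mul_sum]
            refine Finset.sum_congr rfl fun i _ => ?_
            rw [delayCost]
        _ ≤ (1 / d) * ∑ i ∈ Finset.Icc 1 k, ∑ t ∈ T i, p t * (ackWait Y t : ℝ) := by
            apply mul_le_mul_of_nonneg_left ?_ (by positivity)
            exact Finset.sum_le_sum fun i hi =>
              Finset.sum_le_sum fun t ht => hdelay i hi t ht
        _ = (1 / d) * ∑ t ∈ (Finset.Icc 1 k).biUnion T, p t * (ackWait Y t : ℝ) := by
            rw [Finset.sum_biUnion hPD]
        _ ≤ (1 / d) * ∑ t ∈ Finset.Icc 1 n, p t * (ackWait Y t : ℝ) := by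
            apply mul_le_mul_of_nonneg_left ?_ (by positivity)
            apply Finset.sum_le_sum_of_subset_of_nonneg
            · intro a ha
              obtain ⟨i, hi, hai⟩ := mem_biUnion.1 ha
              exact hTsub i hi hai
            · intro t _ _
              exact mul_nonneg (hp t) (Nat.cast_nonneg _)
        _ = delayCost d 1 n p Y := by rw [delayCost]
    -- put everything together
    have hsumcost : ∑ i ∈ Finset.Icc 1 k, cost d (x (i - 1) + 1) (x i) p (Yi i) =
        (∑ i ∈ Finset.Icc 1 k, ((Yi i).card : ℝ)) +
          ∑ i ∈ Finset.Icc 1 k, delayCost d (x (i - 1) + 1) (x i) p (Yi i) := by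
      rw [← Finset.sum_add_distrib]
      rfl
    have hcardR : (∑ i ∈ Finset.Icc 1 k, ((Yi i).card : ℝ)) ≤ (Y.card : ℝ) + k - 1 := by
      have : ((∑ i ∈ Finset.Icc 1 k, (Yi i).card : ℕ) : ℝ) + 1 ≤ (Y.card : ℝ) + k := by
        exact_mod_cast hcardN
      rw [Nat.cast_sum] at this
      linarith
    calc ∑ i ∈ Finset.Icc 1 k, opt d (x (i - 1) + 1) (x i) p
        ≤ ∑ i ∈ Finset.Icc 1 k, cost d (x (i - 1) + 1) (x i) p (Yi i) :=
          Finset.sum_le_sum hopt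
      _ = (∑ i ∈ Finset.Icc 1 k, ((Yi i).card : ℝ)) +
            ∑ i ∈ Finset.Icc 1 k, delayCost d (x (i - 1) + 1) (x i) p (Yi i) := hsumcost
      _ ≤ ((Y.card : ℝ) + k - 1) + delayCost d 1 n p Y := add_le_add hcardR hdelsum
      _ = (k : ℝ) - 1 + cost d 1 n p Y := by rw [cost]; ring
  -- conclude by taking the infimum over Y
  have hne : {c : ℝ | ∃ X, Feasible 1 n p X ∧ cost d 1 n p X = c}.Nonempty :=
    ⟨_, _, hX, rfl⟩
  have hfin : ∑ i ∈ Finset.Icc 1 k, opt d (x (i - 1) + 1) (x i) p - ((k : ℝ) - 1) ≤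
      opt d 1 n p := by
    apply le_csInf hne
    rintro c ⟨Y, hY, rfl⟩
    linarith [key Y hY]
  linarith
end

section
/- Let I be an instance on [n] and Y = {y_1<⋯<y_k} ⊆ [n] with y_k = n; set y_0 = 0, H_i = {y_{i−1}+1,…,y_i}, h_i = y_{i−1}+1, and let I_i be the restriction of I to H_i. Then D(I,{n}) = ∑_{i=1}^{k} D(I_i,{y_i}) + ∑_{i=1}^{k−1} Δ(I⟨h_i,n⟩, {n}, y_i), where Δ(I⟨h_i,n⟩,{n},y_i) = D(I⟨h_i,n⟩,{n}) − D(I⟨h_i,n⟩,{y_i,n}). -/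
open Finset

lemma ackWait_singleton (m t : ℕ) : ackWait {m} t = m - t := by
  unfold ackWait
  rcases le_or_gt t m with h | h
  · have hf : ({m} : Finset ℕ).filter (fun x => t ≤ x) = {m} := by
      simp [Finset.filter_singleton, h]
    rw [dif_pos (by rw [hf]; exact ⟨m, Finset.mem_singleton_self m⟩)]
    congr 1
    refine le_antisymm (Finset.min'_le _ _ (by rw [hf]; simp)) (Finset.le_min' _ _ _ ?_)
    intro z hz
    rw [hf, Finset.mem_singleton] at hz; omega
  · have hf : ({m} : Finset ℕ).filter (fun x => t ≤ x) = ∅ := by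
      simp [Finset.filter_singleton, not_le.mpr h]
    rw [dif_neg (by rw [hf]; simp)]
    omega

lemma ackWait_pair (a n t : ℕ) (han : a ≤ n) :
    ackWait {a, n} t = if t ≤ a then a - t else n - t := by
  unfold ackWait
  rcases le_or_gt t a with h | h
  · have hf : ({a, n} : Finset ℕ).filter (fun x => t ≤ x) = {a, n} := by
      simp [Finset.filter_insert, Finset.filter_singleton, h, h.trans han]
    rw [dif_pos (by rw [hf]; exact ⟨a, by simp⟩)]
    rw [if_pos h]
    congr 1
    refine le_antisymm (Finset.min'_le _ _ (by rw [hf]; simp)) (Finset.le_min' _ _ _ ?_)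
    intro z hz
    rw [hf] at hz
    simp only [Finset.mem_insert, Finset.mem_singleton] at hz
    rcases hz with rfl | rfl <;> omega
  · rcases le_or_gt t n with h2 | h2
    · have hf : ({a, n} : Finset ℕ).filter (fun x => t ≤ x) = {n} := by
        simp [Finset.filter_insert, Finset.filter_singleton, not_le.mpr h, h2]
      rw [dif_pos (by rw [hf]; exact ⟨n, by simp⟩)]
      rw [if_neg (not_le.mpr h)]
      congr 1
      refine le_antisymm (Finset.min'_le _ _ (by rw [hf]; simp)) (Finset.le_min' _ _ _ ?_)
      intro z hz
      rw [hf, Finset.mem_singleton] at hz; omega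
    · have hf : ({a, n} : Finset ℕ).filter (fun x => t ≤ x) = ∅ := by
        simp [Finset.filter_insert, Finset.filter_singleton, not_le.mpr h, not_le.mpr h2]
      rw [dif_neg (by rw [hf]; simp)]
      rw [if_neg (not_le.mpr h)]
      omega
lemma Icc_succ_left' (b c : ℕ) : Finset.Icc (b + 1) c = Finset.Ioc b c := by
  ext x; simp only [Finset.mem_Icc, Finset.mem_Ioc]; omega

lemma delta_eq (d : ℝ) (m a n : ℕ) (hma : m ≤ a) (han : a ≤ n) (p : ℕ → ℝ) :
    delta d (m + 1) n p {n} a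
      = (1 / d) * ∑ t ∈ Finset.Icc (m + 1) a, p t * ((n - a : ℕ) : ℝ) := by
  unfold delta delayCost
  rw [← mul_sub, ← Finset.sum_sub_distrib]
  congr 1
  rw [Icc_succ_left' m n,
    ← Finset.sum_Ioc_consecutive
      (fun t => p t * (ackWait {n} t : ℝ) - p t * (ackWait (insert a {n}) t : ℝ)) hma han]
  have h2 : ∑ t ∈ Finset.Ioc a n,
      (p t * (ackWait {n} t : ℝ) - p t * (ackWait (insert a {n}) t : ℝ)) = 0 := by
    apply Finset.sum_eq_zero
    intro t ht
    rw [Finset.mem_Ioc] at ht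
    rw [ackWait_singleton, ackWait_pair a n t han, if_neg (not_le.mpr ht.1)]
    ring
  rw [h2, add_zero, ← Icc_succ_left' m a]
  apply Finset.sum_congr rfl
  intro t ht
  rw [Finset.mem_Icc] at ht
  rw [ackWait_singleton, ackWait_pair a n t han, if_pos ht.2]
  have c1 : ((n - t : ℕ) : ℝ) = (n : ℝ) - t := Nat.cast_sub (ht.2.trans han)
  have c2 : ((a - t : ℕ) : ℝ) = (a : ℝ) - t := Nat.cast_sub ht.2
  have c3 : ((n - a : ℕ) : ℝ) = (n : ℝ) - a := Nat.cast_sub han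
  rw [c1, c2, c3]
  ring

lemma sum_partition (f : ℕ → ℝ) (y : ℕ → ℕ) (k : ℕ) (hle : ∀ i < k, y i ≤ y (i + 1)) :
    ∑ i ∈ Finset.Icc 1 k, ∑ t ∈ Finset.Icc (y (i - 1) + 1) (y i), f t
      = ∑ t ∈ Finset.Icc (y 0 + 1) (y k), f t := by
  induction k with
  | zero => simp
  | succ m ih =>
    have hy0m : y 0 ≤ y m := by
      clear ih
      induction m with
      | zero => exact le_refl _
      | succ j ihj =>
        exact (ihj (fun i hi => hle i (by omega))).trans (hle j (by omega))
    rw [Finset.sum_Icc_succ_top (by omega : 1 ≤ m + 1),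
      ih (fun i hi => hle i (by omega))]
    simp only [Nat.add_sub_cancel]
    rw [Icc_succ_left', Icc_succ_left', Icc_succ_left']
    exact Finset.sum_Ioc_consecutive _ hy0m (hle m (by omega))
/-- for `Y = {y_1 < ⋯ < y_k}` with `y_k = n` (and `y_0 = 0`,
`H_i = {y_{i−1}+1,…,y_i}`, `h_i = y_{i−1}+1`, `I_i` the restriction of `I` to `H_i`),
`D(I,{n}) = ∑_{i=1}^k D(I_i,{y_i}) + ∑_{i=1}^{k−1} Δ(I⟨h_i,n⟩,{n},y_i)`. -/
theorem delay_single_ack_decomposition (d : ℝ) (hd : 0 < d) (n k : ℕ) (hk : 0 < k)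
    (p : ℕ → ℝ) (hp : ∀ t, 0 ≤ p t)
    (y : ℕ → ℕ) (hy0 : y 0 = 0) (hmono : ∀ i < k, y i < y (i + 1)) (hyk : y k = n) :
    delayCost d 1 n p {n}
      = ∑ i ∈ Finset.Icc 1 k, delayCost d (y (i - 1) + 1) (y i) p {y i}
        + ∑ i ∈ Finset.Icc 1 (k - 1), delta d (y (i - 1) + 1) n p {n} (y i) := by
  have hmono2 : ∀ j ≤ k, ∀ i ≤ j, y i ≤ y j := by
    intro j hj
    induction j with
    | zero => intro i hi; rw [Nat.le_zero.mp hi]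
    | succ m ihm =>
      intro i hi
      by_cases him : i = m + 1
      · rw [him]
      · exact (ihm (by omega) i (by omega)).trans (le_of_lt (hmono m (by omega)))
  have hstep : ∀ i, 1 ≤ i → i ≤ k → y (i - 1) ≤ y i := by
    intro i h1 h2
    have := hmono (i - 1) (by omega)
    have hi : i - 1 + 1 = i := by omega
    rw [hi] at this
    exact this.le
  have hyin : ∀ i ≤ k, y i ≤ n := by
    intro i hi; rw [← hyk]; exact hmono2 k le_rfl i hi
  have hk1 : k - 1 + 1 = k := by omega
  have h2 : ∑ i ∈ Finset.Icc 1 (k - 1), delta d (y (i - 1) + 1) n p {n} (y i)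
      = ∑ i ∈ Finset.Icc 1 k,
          (1 / d) * ∑ t ∈ Finset.Icc (y (i - 1) + 1) (y i), p t * ((n - y i : ℕ) : ℝ) := by
    rw [show Finset.Icc 1 k = Finset.Icc 1 (k - 1 + 1) from by rw [hk1],
      Finset.sum_Icc_succ_top (by omega : 1 ≤ k - 1 + 1)]
    simp only [Nat.add_sub_cancel, hk1, hyk, Nat.sub_self, Nat.cast_zero, mul_zero,
      Finset.sum_const_zero, add_zero]
    apply Finset.sum_congr rfl
    intro i hi
    rw [Finset.mem_Icc] at hi
    exact delta_eq d (y (i - 1)) (y i) n (hstep i hi.1 (by omega)) (hyin i (by omega)) p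
  rw [h2, ← Finset.sum_add_distrib]
  have h3 : ∀ i ∈ Finset.Icc 1 k,
      delayCost d (y (i - 1) + 1) (y i) p {y i}
        + (1 / d) * ∑ t ∈ Finset.Icc (y (i - 1) + 1) (y i), p t * ((n - y i : ℕ) : ℝ)
      = (1 / d) * ∑ t ∈ Finset.Icc (y (i - 1) + 1) (y i), p t * ((n - t : ℕ) : ℝ) := by
    intro i hi
    rw [Finset.mem_Icc] at hi
    have hin : y i ≤ n := hyin i hi.2
    simp only [delayCost, ackWait_singleton]
    rw [← mul_add, ← Finset.sum_add_distrib]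
    congr 1
    apply Finset.sum_congr rfl
    intro t ht
    rw [Finset.mem_Icc] at ht
    rw [Nat.cast_sub ht.2, Nat.cast_sub hin, Nat.cast_sub (ht.2.trans hin)]
    ring
  rw [Finset.sum_congr rfl h3, ← Finset.mul_sum,
    sum_partition (fun t => p t * ((n - t : ℕ) : ℝ)) y k
      (fun i hi => (hmono i hi).le), hy0, hyk]
  simp [delayCost, ackWait_singleton]
end

section
/- Let λ ∈ (0,1] and let Î be an instance on [n] such that {n} is a feasible and optimal solution of Î (F(Î,{n}) = opt(Î)) and Î is a λ-stable interval (Δ(Î,{n},t) ≤ 1−λ for all t ∈ [n]). Let I' be an instance on [n] with Î ⪯ I' (pointwise p̂_t ≤ p'_t), and let Y be a feasible solution of I' with n ∈ Y and F(I',Y) = opt(I'). Then λ·(|Y| − 1) ≤ opt(I') − opt(Î); in particular, any optimal solution of I' containing n has at most (opt(I') − opt(Î))/λ + 1 acknowledgements. -/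
open Finset

lemma ackWait_le_of_mem {X : Finset ℕ} {t x : ℕ} (hx : x ∈ X) (htx : t ≤ x) :
    ackWait X t ≤ x - t := by
  have hm : x ∈ X.filter fun y => t ≤ y := Finset.mem_filter.2 ⟨hx, htx⟩
  have hne : (X.filter fun y => t ≤ y).Nonempty := ⟨x, hm⟩
  rw [ackWait, dif_pos hne]
  exact Nat.sub_le_sub_right (Finset.min'_le _ x hm) t

lemma ackWait_key (n t : ℕ) (ht : t ≤ n) (Y : Finset ℕ) (hY : Y ⊆ Finset.Icc 1 n)
    (hnY : n ∈ Y) :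
    ((ackWait {n} t : ℝ) - (ackWait Y t : ℝ)) ≤
      ∑ s ∈ Y.erase n, ((ackWait {n} t : ℝ) - (ackWait (insert s {n}) t : ℝ)) := by
  have h1 : (ackWait {n} t : ℝ) = (n : ℝ) - t := by
    rw [ackWait_singleton, Nat.cast_sub ht]
  have hterm : ∀ s ∈ Y.erase n, (0:ℝ) ≤ (ackWait {n} t : ℝ) - (ackWait (insert s {n}) t : ℝ) := by
    intro s _
    have h2 : ackWait (insert s {n}) t ≤ n - t :=
      ackWait_le_of_mem (Finset.mem_insert_of_mem (Finset.mem_singleton_self n)) ht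
    have h3 : ((ackWait (insert s {n}) t : ℕ) : ℝ) ≤ ((n - t : ℕ) : ℝ) := Nat.cast_le.2 h2
    rw [Nat.cast_sub ht] at h3
    linarith [h1, h3]
  have hm : n ∈ Y.filter fun y => t ≤ y := Finset.mem_filter.2 ⟨hnY, ht⟩
  have hne : (Y.filter fun y => t ≤ y).Nonempty := ⟨n, hm⟩
  set y := (Y.filter fun y => t ≤ y).min' hne with hy
  have hyF : y ∈ Y.filter fun y => t ≤ y := Finset.min'_mem _ hne
  have hyY : y ∈ Y := (Finset.mem_filter.1 hyF).1
  have hty : t ≤ y := (Finset.mem_filter.1 hyF).2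
  have hackY : ackWait Y t = y - t := by rw [ackWait, dif_pos hne]
  have h2 : (ackWait Y t : ℝ) = (y : ℝ) - t := by rw [hackY, Nat.cast_sub hty]
  by_cases hyn : y = n
  · have hz : (ackWait {n} t : ℝ) - (ackWait Y t : ℝ) = 0 := by rw [h1, h2, hyn]; ring
    rw [hz]
    exact Finset.sum_nonneg hterm
  · have hyE : y ∈ Y.erase n := Finset.mem_erase.2 ⟨hyn, hyY⟩
    have hbound : ackWait (insert y {n}) t ≤ y - t :=
      ackWait_le_of_mem (Finset.mem_insert_self y _) hty
    have hbr : ((ackWait (insert y {n}) t : ℕ) : ℝ) ≤ (y : ℝ) - t := by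
      have := (Nat.cast_le (α := ℝ)).2 hbound
      rwa [Nat.cast_sub hty] at this
    have hLT : (ackWait {n} t : ℝ) - (ackWait Y t : ℝ) ≤
        (ackWait {n} t : ℝ) - (ackWait (insert y {n}) t : ℝ) := by
      rw [h2]; linarith
    exact hLT.trans (Finset.single_le_sum hterm hyE)

/-- if `{n}` is a feasible optimal solution of `Î` and `Î` is a `λ`-stable
interval, then for any instance `I' ⪰ Î` and any optimal feasible solution `Y` of `I'` with
`n ∈ Y`, we have `λ·(|Y| − 1) ≤ opt(I') − opt(Î)`. -/
theorem stable_interval_ack_bound (d : ℝ) (hd : 0 < d) (n : ℕ) (hn : 1 ≤ n)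
    (lam : ℝ) (hlam0 : 0 < lam) (hlam1 : lam ≤ 1)
    (q p' : ℕ → ℝ) (hq : ∀ t, 0 ≤ q t) (hp' : ∀ t, 0 ≤ p' t)
    (hle : ∀ t ∈ Finset.Icc 1 n, q t ≤ p' t)
    (hfeas : Feasible 1 n q {n}) (hopt : cost d 1 n q {n} = opt d 1 n q)
    (hstable : ∀ t ∈ Finset.Icc 1 n, delta d 1 n q {n} t ≤ 1 - lam)
    (Y : Finset ℕ) (hYfeas : Feasible 1 n p' Y) (hnY : n ∈ Y)
    (hYopt : cost d 1 n p' Y = opt d 1 n p') :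
    lam * ((Y.card : ℝ) - 1) ≤ opt d 1 n p' - opt d 1 n q := by
  have hYsub : Y ⊆ Finset.Icc 1 n := hYfeas.2.1
  have hcard1 : 1 ≤ Y.card := Finset.card_pos.2 ⟨n, hnY⟩
  have hcard : (((Y.erase n).card : ℕ) : ℝ) = (Y.card : ℝ) - 1 := by
    rw [Finset.card_erase_of_mem hnY, Nat.cast_sub hcard1, Nat.cast_one]
  have hdinv : (0:ℝ) ≤ 1 / d := by positivity
  -- Step 1: delayCost q Y ≤ delayCost p' Y
  have step1 : delayCost d 1 n q Y ≤ delayCost d 1 n p' Y := by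
    unfold delayCost
    apply mul_le_mul_of_nonneg_left _ hdinv
    apply Finset.sum_le_sum
    intro t htm
    exact mul_le_mul_of_nonneg_right (hle t htm) (Nat.cast_nonneg _)
  -- Step 2: submodularity telescoping
  have step2 : delayCost d 1 n q {n} - delayCost d 1 n q Y ≤
      ∑ s ∈ Y.erase n, delta d 1 n q {n} s := by
    simp only [delta, delayCost, ← mul_sub, ← Finset.mul_sum, ← Finset.sum_sub_distrib]
    apply mul_le_mul_of_nonneg_left _ hdinv
    rw [Finset.sum_comm]
    apply Finset.sum_le_sum
    intro t htm
    have ht : t ≤ n := (Finset.mem_Icc.1 htm).2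
    have hkey := ackWait_key n t ht Y hYsub hnY
    rw [← Finset.mul_sum]
    exact mul_le_mul_of_nonneg_left hkey (hq t)
  -- Step 3: stability bound
  have step3 : ∑ s ∈ Y.erase n, delta d 1 n q {n} s ≤ ((Y.erase n).card : ℝ) * (1 - lam) := by
    calc ∑ s ∈ Y.erase n, delta d 1 n q {n} s
        ≤ ∑ _s ∈ Y.erase n, (1 - lam) :=
          Finset.sum_le_sum fun s hs => hstable s (hYsub (Finset.mem_of_mem_erase hs))
      _ = ((Y.erase n).card : ℝ) * (1 - lam) := by rw [Finset.sum_const, nsmul_eq_mul]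
  rw [← hYopt, ← hopt]
  unfold cost
  rw [Finset.card_singleton]
  have hring : lam * ((Y.card : ℝ) - 1) =
      ((Y.card : ℝ) - 1) - ((Y.card : ℝ) - 1) * (1 - lam) := by ring
  rw [hcard] at step3
  rw [hring]
  push_cast
  linarith [step1, step2.trans step3]
end
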